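/- arXiv:math/9912074 — 2 statements merged into one kernel-verified Lean document; each statement's English description precedes it below -/
import Mathlib

section
/- Let G be a finite group with subgroups I ≤ K ≤ G. Define the averaging map π sending a bi-I-invariant function f : G → ℚ to π(f)(g) = (1/|I|)·∑_{x∈K} f(xg). If f lies in the center of the Hecke algebra H(G,I) (i.e., f⋆h = h⋆f for all bi-I-invariant h, where (f⋆h)(x) = (1/|I|)∑_y f(y)h(y⁻¹x)), then π(f) is bi-K-invariant. -/
open scoped BigOperators

/-- A function `f : G → ℚ` is bi-`K`-invariant if `f (k₁ * g * k₂) = f g` for all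
`k₁, k₂ ∈ K`. -/
def BiInvariant {G : Type*} [Group G] (K : Subgroup G) (f : G → ℚ) : Prop :=
  ∀ k₁ ∈ K, ∀ k₂ ∈ K, ∀ g : G, f (k₁ * g * k₂) = f g

/-- Convolution with Haar measure normalized so that `I` has measure `1`. -/
noncomputable def hconv {G : Type*} [Group G] [Fintype G] (I : Subgroup G) (f g : G → ℚ) :
    G → ℚ :=
  fun x => (Nat.card I : ℚ)⁻¹ * ∑ y : G, f y * g (y⁻¹ * x)

/-- The averaging map `π(f)(g) = (1/|I|) ∑_{x ∈ K} f(x·g)`. -/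
noncomputable def avgMap {G : Type*} [Group G] (I K : Subgroup G) [Fintype K] (f : G → ℚ) :
    G → ℚ :=
  fun g => (Nat.card I : ℚ)⁻¹ * ∑ x : K, f ((x : G) * g)

/-!
`π(f)` is the convolution `1_K ⋆ f`, which is visibly left `K`-invariant, while `f ⋆ 1_K` is
visibly right `K`-invariant. Since `I ≤ K`, the indicator `1_K` lies in `H(G,I)`, so for
central `f` the two convolutions agree and `π(f)` is invariant on both sides.
-/

namespace Subgroup

variable {G : Type*} [Group G] (K : Subgroup G)

theorem indicator_one_inv {M : Type*} [One M] [Zero M] (g : G) :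
    (K : Set G).indicator (1 : G → M) g⁻¹ = (K : Set G).indicator 1 g := by
  classical
  simp [Set.indicator_apply]

variable [Fintype K]

theorem sum_indicator_one_mul {M : Type*} [NonAssocSemiring M] [Fintype G] (φ : G → M) :
    ∑ y : G, (K : Set G).indicator 1 y * φ y = ∑ k : K, φ k := by
  classical
  simp only [Set.indicator_apply, SetLike.mem_coe, Pi.one_apply, ite_mul, one_mul, zero_mul]
  rw [← Finset.sum_filter]
  exact Finset.sum_subtype _ (by simp) φ

theorem sum_mul_mem_left {M : Type*} [AddCommMonoid M] (φ : G → M) {k : G} (hk : k ∈ K)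
    (g : G) : ∑ x : K, φ (x * (k * g)) = ∑ x : K, φ (x * g) := by
  simpa [mul_assoc] using Equiv.sum_comp (Equiv.mulRight (⟨k, hk⟩ : K)) (fun x : K => φ (x * g))

theorem sum_mul_mem_right {M : Type*} [AddCommMonoid M] (φ : G → M) {k : G} (hk : k ∈ K)
    (g : G) : ∑ x : K, φ (g * k * x) = ∑ x : K, φ (g * x) := by
  simpa [mul_assoc] using Equiv.sum_comp (Equiv.mulLeft (⟨k, hk⟩ : K)) (fun x : K => φ (g * x))

end Subgroup

theorem avgMap_mul_mem_left {G : Type*} [Group G] (I K : Subgroup G) [Fintype K] (f : G → ℚ)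
    {k : G} (hk : k ∈ K) (g : G) : avgMap I K f (k * g) = avgMap I K f g := by
  simp only [avgMap, K.sum_mul_mem_left f hk]

theorem biInvariant_indicator_one {G : Type*} [Group G] {I K : Subgroup G} (hIK : I ≤ K) :
    BiInvariant I ((K : Set G).indicator 1) := by
  classical
  intro k₁ hk₁ k₂ hk₂ g
  simp only [Set.indicator_apply, SetLike.mem_coe, Pi.one_apply, mul_mem_cancel_right (hIK hk₂),
    mul_mem_cancel_left (hIK hk₁)]

section Hecke

variable {G : Type*} [Group G] [Fintype G] (I K : Subgroup G) [Fintype K]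

theorem hconv_indicator_one_left (f : G → ℚ) :
    hconv I ((K : Set G).indicator 1) f = avgMap I K f := by
  ext g
  rw [hconv, avgMap, K.sum_indicator_one_mul (fun y => f (y⁻¹ * g))]
  congr 1
  simpa using Equiv.sum_comp (Equiv.inv K) (fun x : K => f (x * g))

theorem hconv_indicator_one_right_apply (f : G → ℚ) (g : G) :
    hconv I f ((K : Set G).indicator 1) g = (Nat.card I : ℚ)⁻¹ * ∑ x : K, f (g * x) := by
  rw [hconv, ← Equiv.sum_comp (Equiv.mulLeft g), ← K.sum_indicator_one_mul (fun x => f (g * x))]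
  simp only [Equiv.coe_mulLeft, mul_inv_rev, inv_mul_cancel_right, K.indicator_one_inv,
    mul_comm (f _)]

theorem hconv_indicator_one_right_mul_mem (f : G → ℚ) {k : G} (hk : k ∈ K) (g : G) :
    hconv I f ((K : Set G).indicator 1) (g * k) = hconv I f ((K : Set G).indicator 1) g := by
  simp only [hconv_indicator_one_right_apply, K.sum_mul_mem_right f hk]

end Hecke

theorem stmt8_general (G : Type*) [Group G] [Fintype G] (I K : Subgroup G) [Fintype K] (hIK : I ≤ K)
    (f : G → ℚ)
    (hcentral : ∀ h : G → ℚ, BiInvariant I h → hconv I f h = hconv I h f) :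
    BiInvariant K (avgMap I K f) := by
  have hπ : avgMap I K f = hconv I f ((K : Set G).indicator 1) := by
    rw [hcentral _ (biInvariant_indicator_one hIK), hconv_indicator_one_left]
  intro k₁ hk₁ k₂ hk₂ g
  rw [mul_assoc, avgMap_mul_mem_left I K f hk₁, hπ, hconv_indicator_one_right_mul_mem I K f hk₂]

/-- Let `I ≤ K ≤ G` be subgroups of a finite group `G`.  If `f` is bi-`I`-invariant and lies
in the center of the Hecke algebra `H(G,I)`, then the averaged function `π(f)` is
bi-`K`-invariant. -/
theorem stmt8 (G : Type*) [Group G] [Fintype G] (I K : Subgroup G) [Fintype K] (hIK : I ≤ K)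
    (f : G → ℚ) (hf : BiInvariant I f)
    (hcentral : ∀ h : G → ℚ, BiInvariant I h → hconv I f h = hconv I h f) :
    BiInvariant K (avgMap I K f) :=
  stmt8_general G I K hIK f hcentral
end

section
/- Let V be a finite-dimensional vector space over an algebraically closed field of characteristic zero, and let g, h be invertible linear endomorphisms of V such that h∘g∘h⁻¹ = g^q for some integer q ≥ 2. Then every eigenvalue of g is a root of unity. -/
/-!
Conjugation by `h` preserves the spectrum, so the spectrum of `g` (finite, and free of `0` since
`g` is invertible) is stable under `μ ↦ μ ^ q`. The sequence `μ ^ q ^ k` then takes a value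
twice, `μ ^ q ^ i = μ ^ q ^ j` with `i < j`, and cancelling gives `μ ^ (q ^ j - q ^ i) = 1`.
-/

theorem IsLeftRegular.isOfFinOrder_of_pow_eq_pow {M : Type*} [Monoid M] {x : M}
    (hx : IsLeftRegular x) {m n : ℕ} (hmn : m < n) (h : x ^ m = x ^ n) : IsOfFinOrder x := by
  refine isOfFinOrder_iff_pow_eq_one.2 ⟨n - m, Nat.sub_pos_of_lt hmn, hx.pow m ?_⟩
  show x ^ m * x ^ (n - m) = x ^ m * 1
  rw [← pow_add, Nat.add_sub_cancel' hmn.le, mul_one, h]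

theorem IsLeftRegular.isOfFinOrder_of_finite_of_pow_mem {M : Type*} [Monoid M] {S : Set M}
    (hS : S.Finite) {q : ℕ} (hq : 2 ≤ q) (hSq : ∀ x ∈ S, x ^ q ∈ S) {x : M} (hxS : x ∈ S)
    (hx : IsLeftRegular x) : IsOfFinOrder x := by
  have hmem : ∀ k, x ^ q ^ k ∈ S := by
    intro k
    induction k with
    | zero => simpa using hxS
    | succ k ih => simpa [pow_succ, pow_mul] using hSq _ ih
  obtain ⟨i, j, hij, heq⟩ := hS.exists_lt_map_eq_of_forall_mem hmem
  exact hx.isOfFinOrder_of_pow_eq_pow (Nat.pow_lt_pow_right hq hij) heq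

theorem spectrum.pow_mem_of_units_conj_eq_pow {𝕜 A : Type*} [Field 𝕜] [Ring A] [Algebra 𝕜 A]
    {a : A} {u : Aˣ} {q : ℕ} (hconj : u * a * u⁻¹ = a ^ q) {μ : 𝕜} (hμ : μ ∈ spectrum 𝕜 a) :
    μ ^ q ∈ spectrum 𝕜 a := by
  simpa [← hconj] using spectrum.pow_mem_pow a q hμ

theorem stmt10_general (F : Type*) [Field F]
    (V : Type*) [AddCommGroup V] [Module F V] [FiniteDimensional F V]
    (g h : V ≃ₗ[F] V) (q : ℕ) (hq : 2 ≤ q) (hconj : h * g * h⁻¹ = g ^ q) :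
    ∀ μ : F, Module.End.HasEigenvalue (g : Module.End F V) μ →
      ∃ n : ℕ, 0 < n ∧ μ ^ n = 1 := by
  intro μ hμ
  -- `e` turns automorphisms into units of the algebra `Module.End F V`, where spectra live.
  let e := (LinearMap.GeneralLinearGroup.generalLinearEquiv F V).symm
  have hconj' : (e h : Module.End F V) * e g * ↑(e h)⁻¹ = (e g : Module.End F V) ^ q := by
    simpa using congrArg (fun x ↦ (e x : Module.End F V)) hconj
  have hμσ : μ ∈ spectrum F (e g : Module.End F V) :=
    Module.End.hasEigenvalue_iff_mem_spectrum.1 hμ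
  have hμ0 : μ ≠ 0 := ne_of_mem_of_not_mem hμσ (spectrum.zero_notMem F (e g).isUnit)
  refine isOfFinOrder_iff_pow_eq_one.1 ?_
  exact (IsRegular.of_ne_zero hμ0).left.isOfFinOrder_of_finite_of_pow_mem
    (Module.End.finite_spectrum _) hq (fun _ ↦ spectrum.pow_mem_of_units_conj_eq_pow hconj') hμσ

/-- Grothendieck's quasi-unipotence lemma: if `g, h` are invertible endomorphisms of a
finite-dimensional vector space over an algebraically closed field of characteristic zero
with `h g h⁻¹ = g^q` for some `q ≥ 2`, then every eigenvalue of `g` is a root of unity. -/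
theorem stmt10 (F : Type*) [Field F] [IsAlgClosed F] [CharZero F]
    (V : Type*) [AddCommGroup V] [Module F V] [FiniteDimensional F V]
    (g h : V ≃ₗ[F] V) (q : ℕ) (hq : 2 ≤ q) (hconj : h * g * h⁻¹ = g ^ q) :
    ∀ μ : F, Module.End.HasEigenvalue (g : Module.End F V) μ →
      ∃ n : ℕ, 0 < n ∧ μ ^ n = 1 :=
  stmt10_general F V g h q hq hconj
end
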